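/- arXiv:2010.07452 — 2 statements merged into one kernel-verified Lean document; each statement's English description precedes it below -/
import Mathlib

section
/- Let X be a Borel subset of ℝ^m, Y a finite set, U a finite set, T a transition kernel from X×U to X and Q an observation kernel from X to Y, and let η be the associated belief transition kernel. Assume that for some α_X < ∞ one has ‖T(·|x,u) − T(·|x',u)‖_TV ≤ α_X |x − x'| for all x, x' ∈ X and all u ∈ U, and let δ(Q) = inf_{x,x'∈X} Σ_{y∈Y} min(Q(y|x), Q(y|x')) be the Dobrushin coefficient of Q. Then for every z, z' ∈ P(X), every u ∈ U, and every sequence (f_m)_{m≥1} of measurable functions f_m : X → ℝ with ‖f_m‖_∞ ≤ 1, one has ρ_BL^ρ(η(·|z,u), η(·|z',u)) ≤ (3 − 2δ(Q))(1 + α_X) ρ_BL(z, z'), where ρ_BL on the right-hand side is the bounded-Lipschitz metric on P(X) induced by the Euclidean metric on X. -/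
open MeasureTheory

noncomputable section

/-- `‖f‖_BL ≤ c` with respect to the distance-like function `d`:
there are `a, b ≥ 0` with `a + b ≤ c` such that `f` is bounded by `a` and
`b`-Lipschitz with respect to `d`. -/
def blNormLE {S : Type*} (d : S → S → ℝ) (f : S → ℝ) (c : ℝ) : Prop :=
  ∃ a b : ℝ, 0 ≤ a ∧ 0 ≤ b ∧ a + b ≤ c ∧ (∀ x, |f x| ≤ a) ∧
    ∀ x y, |f x - f y| ≤ b * d x y

/-- Bounded-Lipschitz distance between two measures, induced by `d`. -/
def blDist {S : Type*} [MeasurableSpace S] (d : S → S → ℝ) (μ ν : Measure S) : ℝ :=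
  sSup {r | ∃ f : S → ℝ, Measurable f ∧ blNormLE d f 1 ∧
    r = |∫ x, f x ∂μ - ∫ x, f x ∂ν|}

/-- Total variation distance between two measures. -/
def tvDist {S : Type*} [MeasurableSpace S] (μ ν : Measure S) : ℝ :=
  sSup {r | ∃ f : S → ℝ, Measurable f ∧ (∀ x, |f x| ≤ 1) ∧
    r = |∫ x, f x ∂μ - ∫ x, f x ∂ν|}

variable {X Y U : Type*} [MeasurableSpace X] [Fintype Y]

/-- One-step push-forward `zT_u` of a belief `z` through the transition kernel `T`. -/
def beliefPush (T : X → U → Measure X) (z : Measure X) (u : U) : Measure X :=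
  z.bind fun x => T x u

/-- Predictive probability `P(y|z,u) = ∫ Q(y|x₁) (zT_u)(dx₁)` of observing `y`. -/
def obsProb (T : X → U → Measure X) (Q : X → Y → ℝ) (z : Measure X) (u : U) (y : Y) : ℝ :=
  ∫ x, Q x y ∂(beliefPush T z u)

/-- Bayes update `F(z,u,y)` of the belief `z` after applying `u` and observing `y`. -/
def bayes (T : X → U → Measure X) (Q : X → Y → ℝ) (z : Measure X) (u : U) (y : Y) :
    Measure X :=
  (ENNReal.ofReal (obsProb T Q z u y))⁻¹ •
    ((beliefPush T z u).withDensity fun x => ENNReal.ofReal (Q x y))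

/-- Integral of a function `f` on beliefs against the belief transition kernel
`η(·|z,u) = Σ_{y : P(y|z,u) > 0} P(y|z,u) δ_{F(z,u,y)}`. -/
def etaInt (T : X → U → Measure X) (Q : X → Y → ℝ) (f : Measure X → ℝ)
    (z : Measure X) (u : U) : ℝ :=
  ∑ y : Y, if 0 < obsProb T Q z u y then obsProb T Q z u y * f (bayes T Q z u y) else 0

/-- Bounded-Lipschitz distance (with respect to a pseudometric `ρ` on beliefs)
between `η(·|z,u)` and `η(·|z',u)`. -/
def etaBLDist (T : X → U → Measure X) (Q : X → Y → ℝ)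
    (ρ : Measure X → Measure X → ℝ) (z z' : Measure X) (u : U) : ℝ :=
  sSup {r | ∃ f : Measure X → ℝ, blNormLE ρ f 1 ∧
    r = |etaInt T Q f z u - etaInt T Q f z' u|}

/-- The pseudometric `ρ(μ,ν) = Σ_{m ≥ 1} 2^{-(m+1)} |∫ f_m dμ - ∫ f_m dν|` on beliefs
induced by the sequence of test functions `fs` (with `fs k` playing the role of `f_{k+1}`). -/
def rhoSeq (fs : ℕ → X → ℝ) (μ ν : Measure X) : ℝ :=
  ∑' k : ℕ, (2 : ℝ)⁻¹ ^ (k + 2) * |∫ x, fs k x ∂μ - ∫ x, fs k x ∂ν|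

/-- Dobrushin coefficient of an observation channel `Q` into a finite set. -/
def dobrushinObs (Q : X → Y → ℝ) : ℝ :=
  ⨅ p : X × X, ∑ y : Y, min (Q p.1 y) (Q p.2 y)

/-- Dobrushin coefficient of a Markov kernel `K`, via finite measurable partitions. -/
def dobrushinKernel (K : X → Measure X) : ℝ :=
  sInf {r | ∃ (x x' : X) (n : ℕ) (A : Fin n → Set X),
    (∀ i, MeasurableSet (A i)) ∧ Pairwise (Function.onFun Disjoint A) ∧
    (⋃ i, A i) = Set.univ ∧
    r = ∑ i, min ((K x (A i)).toReal) ((K x' (A i)).toReal)}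

/-- `δ̃(T) = inf_u δ(T(·|·,u))`. -/
def dobrushinTrans (T : X → U → Measure X) : ℝ :=
  ⨅ u : U, dobrushinKernel fun x => T x u

end

/-!
Write `μ = zT_u`, `μ' = z'T_u`, `p_y = P(y|·,u)` and `A_{y,k} = ∫ Q(y|·) f_k` for the two beliefs.
Both `y ↦ Q(y|·)` and `y ↦ Q(y|·) f_k` are families whose absolute values sum to at most `1`
pointwise, so `Σ_y |p_y - p'_y|` and `Σ_y |A_{y,k} - A'_{y,k}|` are at most `‖μ - μ'‖_TV`.
Since `∫ f_k dF(z,u,y) = A_{y,k} / p_y`, the elementary bound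
`p' |A/p - A'/p'| ≤ |p - p'| + |A - A'|` (valid when `|A| ≤ p`) gives
`Σ_y p'_y ρ(F(z,u,y), F(z',u,y)) ≤ ‖μ - μ'‖_TV`, and hence every test function of BL norm
at most `1` moves by at most `‖μ - μ'‖_TV` between `η(·|z,u)` and `η(·|z',u)`.
Finally `x ↦ ∫ g dT(·|x,u)` has BL norm at most `1 + α_X` when `|g| ≤ 1`, so
`‖μ - μ'‖_TV ≤ (1 + α_X) ρ_BL(z, z')`; this is already the claim, as `δ(Q) ≤ 1`.
-/

open ProbabilityTheory

section BLNorm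

variable {S : Type*} {d : S → S → ℝ} {f : S → ℝ} {c : ℝ}

lemma blNormLE.abs_le (hf : blNormLE d f c) (x : S) : |f x| ≤ c := by
  obtain ⟨a, b, -, hb, hab, hfa, -⟩ := hf
  linarith [hfa x]

lemma blNormLE.const_mul {r : ℝ} (hf : blNormLE d f c) (hr : 0 ≤ r) :
    blNormLE d (fun x => r * f x) (r * c) := by
  obtain ⟨a, b, ha, hb, hab, hfa, hfb⟩ := hf
  refine ⟨r * a, r * b, by positivity, by positivity, by rw [← mul_add]; gcongr,
    fun x => ?_, fun x y => ?_⟩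
  · rw [abs_mul, abs_of_nonneg hr]; gcongr; exact hfa x
  · rw [← mul_sub, abs_mul, abs_of_nonneg hr, mul_assoc]; gcongr; exact hfb x y

end BLNorm

section Distances

variable {S : Type*} [MeasurableSpace S] {μ ν : Measure S}

lemma integrable_of_abs_le [IsFiniteMeasure μ] {g : S → ℝ} {C : ℝ} (hg : Measurable g)
    (hg_le : ∀ x, |g x| ≤ C) : Integrable g μ :=
  .of_bound hg.aestronglyMeasurable C
    (.of_forall fun x => (Real.norm_eq_abs (g x)).trans_le (hg_le x))

lemma abs_integral_le_of_abs_le [IsProbabilityMeasure μ] {g : S → ℝ} {C : ℝ}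
    (hg : ∀ x, |g x| ≤ C) : |∫ x, g x ∂μ| ≤ C := by
  simpa using norm_integral_le_of_norm_le_const (μ := μ) (C := C)
    (.of_forall fun x => (Real.norm_eq_abs (g x)).trans_le (hg x))

lemma abs_integral_sub_le_two [IsProbabilityMeasure μ] [IsProbabilityMeasure ν] {g : S → ℝ}
    (hg : ∀ x, |g x| ≤ 1) : |∫ x, g x ∂μ - ∫ x, g x ∂ν| ≤ 2 := by
  linarith [abs_sub (∫ x, g x ∂μ) (∫ x, g x ∂ν), abs_integral_le_of_abs_le (μ := μ) hg,
    abs_integral_le_of_abs_le (μ := ν) hg]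

lemma abs_integral_mul_le_integral [IsFiniteMeasure μ] {q g : S → ℝ} (hq : ∀ x, 0 ≤ q x)
    (hq_int : Integrable q μ) (hg : ∀ x, |g x| ≤ 1) : |∫ x, q x * g x ∂μ| ≤ ∫ x, q x ∂μ := by
  refine abs_integral_le_integral_abs.trans <| integral_mono_of_nonneg
    (.of_forall fun x => abs_nonneg _) hq_int (.of_forall fun x => ?_)
  dsimp only
  rw [abs_mul, abs_of_nonneg (hq x)]
  exact mul_le_of_le_one_right (hq x) (hg x)

lemma tvDist_nonneg : 0 ≤ tvDist μ ν :=
  Real.sSup_nonneg <| by rintro _ ⟨g, -, -, rfl⟩; exact abs_nonneg _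

lemma abs_integral_sub_le_tvDist [IsProbabilityMeasure μ] [IsProbabilityMeasure ν] {g : S → ℝ}
    (hg : Measurable g) (hg_le : ∀ x, |g x| ≤ 1) :
    |∫ x, g x ∂μ - ∫ x, g x ∂ν| ≤ tvDist μ ν :=
  le_csSup ⟨2, by rintro _ ⟨g, -, hg, rfl⟩; exact abs_integral_sub_le_two hg⟩ ⟨g, hg, hg_le, rfl⟩

lemma sum_abs_integral_sub_le_tvDist [IsProbabilityMeasure μ] [IsProbabilityMeasure ν]
    {ι : Type*} [Fintype ι] {g : ι → S → ℝ} (hg : ∀ i, Measurable (g i))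
    (hg_le : ∀ x, ∑ i, |g i x| ≤ 1) :
    ∑ i, |∫ x, g i x ∂μ - ∫ x, g i x ∂ν| ≤ tvDist μ ν := by
  set s : ι → ℝ := fun i => SignType.sign (∫ x, g i x ∂μ - ∫ x, g i x ∂ν)
  have hs : ∀ i, |s i| ≤ 1 := fun i => by
    simp only [s]
    generalize SignType.sign (∫ x, g i x ∂μ - ∫ x, g i x ∂ν) = t
    cases t <;> norm_num
  have hint : ∀ (m : Measure S) [IsProbabilityMeasure m] i, Integrable (g i) m :=
    fun m _ i => integrable_of_abs_le (hg i) fun x =>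
      (Finset.single_le_sum (fun j _ => abs_nonneg (g j x)) (Finset.mem_univ i)).trans (hg_le x)
  have hG : ∀ (m : Measure S) [IsProbabilityMeasure m],
      ∫ x, ∑ i, s i * g i x ∂m = ∑ i, s i * ∫ x, g i x ∂m := fun m _ => by
    rw [integral_finsetSum _ fun i _ => (hint m i).const_mul (s i)]
    simp only [integral_const_mul]
  calc ∑ i, |∫ x, g i x ∂μ - ∫ x, g i x ∂ν|
      = ∫ x, ∑ i, s i * g i x ∂μ - ∫ x, ∑ i, s i * g i x ∂ν := by
        simp only [hG, ← Finset.sum_sub_distrib, ← mul_sub, s, sign_mul_self]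
    _ ≤ tvDist μ ν := (le_abs_self _).trans <| abs_integral_sub_le_tvDist
        (Finset.measurable_sum _ fun i _ => (hg i).const_mul (s i)) fun x =>
          (Finset.abs_sum_le_sum_abs _ _).trans <| (Finset.sum_le_sum fun i _ => by
            rw [abs_mul]; exact mul_le_of_le_one_left (abs_nonneg _) (hs i)).trans (hg_le x)

lemma blDist_nonneg {d : S → S → ℝ} : 0 ≤ blDist d μ ν :=
  Real.sSup_nonneg <| by rintro _ ⟨f, -, -, rfl⟩; exact abs_nonneg _

lemma blDist_self (d : S → S → ℝ) (μ : Measure S) : blDist d μ μ = 0 :=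
  le_antisymm (Real.sSup_le (by rintro _ ⟨f, -, -, rfl⟩; simp) le_rfl) blDist_nonneg

lemma abs_integral_sub_le_mul_blDist [IsProbabilityMeasure μ] [IsProbabilityMeasure ν]
    {d : S → S → ℝ} {f : S → ℝ} {c : ℝ} (hf : Measurable f) (hc : 0 < c) (hfc : blNormLE d f c) :
    |∫ x, f x ∂μ - ∫ x, f x ∂ν| ≤ c * blDist d μ ν := by
  have hf' : blNormLE d (fun x => c⁻¹ * f x) 1 := by
    simpa [inv_mul_cancel₀ hc.ne'] using hfc.const_mul (inv_nonneg.2 hc.le)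
  have := le_csSup (s := {r | ∃ f : S → ℝ, Measurable f ∧ blNormLE d f 1 ∧
      r = |∫ x, f x ∂μ - ∫ x, f x ∂ν|})
    ⟨2, by rintro _ ⟨g, -, hg, rfl⟩; exact abs_integral_sub_le_two hg.abs_le⟩
    ⟨_, hf.const_mul c⁻¹, hf', rfl⟩
  rw [integral_const_mul, integral_const_mul, ← mul_sub, abs_mul, abs_of_pos (inv_pos.2 hc),
    inv_mul_le_iff₀ hc] at this
  exact this

end Distances

section Kernel

variable {S S' : Type*} [MeasurableSpace S] [MeasurableSpace S']

lemma integral_measure_comp {κ : Kernel S S'} [IsSFiniteKernel κ] {μ : Measure S} [SFinite μ]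
    {g : S' → ℝ} (hg : Integrable g (κ ∘ₘ μ)) :
    ∫ y, g y ∂(κ ∘ₘ μ) = ∫ x, ∫ y, g y ∂κ x ∂μ := by
  rw [Measure.comp_eq_comp_const_apply, Kernel.integral_comp]
  · simp
  · rwa [← Measure.comp_eq_comp_const_apply]

lemma tvDist_comp_le_mul_blDist {κ : Kernel S S'} [IsMarkovKernel κ] {d : S → S → ℝ} {α : ℝ}
    (hα : 0 ≤ α) (hκ : ∀ x x', tvDist (κ x) (κ x') ≤ α * d x x')
    {μ ν : Measure S} [IsProbabilityMeasure μ] [IsProbabilityMeasure ν] :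
    tvDist (κ ∘ₘ μ) (κ ∘ₘ ν) ≤ (1 + α) * blDist d μ ν := by
  refine Real.sSup_le ?_ (mul_nonneg (by linarith) blDist_nonneg)
  rintro _ ⟨g, hg, hg_le, rfl⟩
  rw [integral_measure_comp (integrable_of_abs_le hg hg_le),
    integral_measure_comp (integrable_of_abs_le hg hg_le)]
  exact abs_integral_sub_le_mul_blDist hg.stronglyMeasurable.integral_kernel.measurable
    (by linarith) ⟨1, α, zero_le_one, hα, le_rfl, fun x => abs_integral_le_of_abs_le hg_le,
      fun x x' => (abs_integral_sub_le_tvDist hg hg_le).trans (hκ x x')⟩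

end Kernel

lemma mul_abs_inv_mul_sub_inv_mul_le {p p' A A' : ℝ} (hp' : 0 ≤ p') (hA : |A| ≤ p) :
    p' * |p⁻¹ * A - p'⁻¹ * A'| ≤ |p - p'| + |A - A'| := by
  rcases hp'.eq_or_lt with rfl | hp'
  · simp only [zero_mul]; positivity
  have hp : 0 ≤ p := (abs_nonneg A).trans hA
  have hpA : p⁻¹ * A * p = A := by
    rcases hp.eq_or_lt with rfl | hp
    · simp [abs_nonpos_iff.1 hA]
    · field_simp
  have hfrac : |p⁻¹ * A| ≤ 1 := by
    rw [abs_mul, abs_inv, abs_of_nonneg hp]; exact inv_mul_le_one_of_le₀ hA hp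
  calc p' * |p⁻¹ * A - p'⁻¹ * A'| = |p⁻¹ * A * (p' - p) + (A - A')| := by
        rw [← abs_of_pos hp', ← abs_mul, abs_of_pos hp', mul_sub, mul_inv_cancel_left₀ hp'.ne']
        congr 1; linear_combination hpA
    _ ≤ |p⁻¹ * A| * |p - p'| + |A - A'| := by
        rw [abs_sub_comm p p', ← abs_mul]; exact abs_add_le _ _
    _ ≤ |p - p'| + |A - A'| := by
        gcongr; exact mul_le_of_le_one_left (abs_nonneg _) hfrac

lemma hasSum_inv_two_pow_add_two : HasSum (fun k : ℕ => (2 : ℝ)⁻¹ ^ (k + 2)) 2⁻¹ := by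
  have := (hasSum_geometric_of_lt_one (r := (2 : ℝ)⁻¹) (by norm_num) (by norm_num)).mul_right
    ((2 : ℝ)⁻¹ ^ 2)
  have hsum : (1 - (2 : ℝ)⁻¹)⁻¹ * 2⁻¹ ^ 2 = 2⁻¹ := by norm_num
  simpa only [← pow_add, hsum] using this

lemma sum_mul_rhoSeq_le {X ι : Type*} [MeasurableSpace X] [Fintype ι] {fs : ℕ → X → ℝ}
    {w : ι → ℝ} {μ ν : ι → Measure X} {M C : ℝ}
    (hM : ∀ i k, |∫ x, fs k x ∂μ i - ∫ x, fs k x ∂ν i| ≤ M)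
    (hC : ∀ k, ∑ i, w i * |∫ x, fs k x ∂μ i - ∫ x, fs k x ∂ν i| ≤ C) :
    ∑ i, w i * rhoSeq fs (μ i) (ν i) ≤ C / 2 := by
  have hsummable : ∀ i, Summable fun k : ℕ =>
      (2 : ℝ)⁻¹ ^ (k + 2) * |∫ x, fs k x ∂μ i - ∫ x, fs k x ∂ν i| := fun i =>
    (hasSum_inv_two_pow_add_two.summable.mul_right M).of_nonneg_of_le
      (fun k => by positivity) fun k => by gcongr; exact hM i k
  have hsum := hasSum_sum (s := Finset.univ) fun i _ => ((hsummable i).hasSum.mul_left (w i))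
  refine (hasSum_le (fun k => ?_) hsum (hasSum_inv_two_pow_add_two.mul_right C)).trans_eq
    (by ring)
  calc ∑ i, w i * ((2 : ℝ)⁻¹ ^ (k + 2) * |∫ x, fs k x ∂μ i - ∫ x, fs k x ∂ν i|)
      = (2 : ℝ)⁻¹ ^ (k + 2) * ∑ i, w i * |∫ x, fs k x ∂μ i - ∫ x, fs k x ∂ν i| := by
        rw [Finset.mul_sum]; congr 1; ext i; ring
    _ ≤ (2 : ℝ)⁻¹ ^ (k + 2) * C := by gcongr; exact hC k

section Beliefs

variable {X Y U : Type*} [MeasurableSpace X] {T : X → U → Measure X}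
  {Q : X → Y → ℝ}

lemma obsProb_nonneg (hQ_nonneg : ∀ x y, 0 ≤ Q x y) (z : Measure X) (u : U) (y : Y) :
    0 ≤ obsProb T Q z u y :=
  integral_nonneg fun x => hQ_nonneg x y

lemma etaInt_eq_sum [Fintype Y] (hQ_nonneg : ∀ x y, 0 ≤ Q x y) (f : Measure X → ℝ)
    (z : Measure X) (u : U) :
    etaInt T Q f z u = ∑ y, obsProb T Q z u y * f (bayes T Q z u y) := by
  refine Finset.sum_congr rfl fun y _ => ?_
  split_ifs with h
  · rfl
  · rw [le_antisymm (not_lt.1 h) (obsProb_nonneg hQ_nonneg z u y), zero_mul]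

-- Also when `P(y|z,u) = 0`: then `(ofReal 0)⁻¹ = ∞` has `toReal` equal to `0 = 0⁻¹`.
lemma integral_bayes [Fintype Y] (hQ_meas : ∀ y, Measurable fun x => Q x y)
    (hQ_nonneg : ∀ x y, 0 ≤ Q x y) (z : Measure X) (u : U) (y : Y) (g : X → ℝ) :
    ∫ x, g x ∂(bayes T Q z u y) =
      (obsProb T Q z u y)⁻¹ * ∫ x, Q x y * g x ∂(beliefPush T z u) := by
  rw [bayes, integral_smul_measure, ENNReal.toReal_inv,
    ENNReal.toReal_ofReal (obsProb_nonneg hQ_nonneg z u y), smul_eq_mul]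
  congr 1
  rw [show (fun x => ENNReal.ofReal (Q x y)) = fun x => ((Q x y).toNNReal : ENNReal) from rfl,
    integral_withDensity_eq_integral_smul (hQ_meas y).real_toNNReal]
  refine integral_congr_ae (.of_forall fun x => ?_)
  simp only [NNReal.smul_def, Real.coe_toNNReal _ (hQ_nonneg x y), smul_eq_mul]

lemma sum_abs_obsProb_sub_le_tvDist [Fintype Y] (hQ_meas : ∀ y, Measurable fun x => Q x y)
    (hQ_nonneg : ∀ x y, 0 ≤ Q x y) (hQ_sum : ∀ x, ∑ y, Q x y = 1) {z z' : Measure X} {u : U}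
    [IsProbabilityMeasure (beliefPush T z u)] [IsProbabilityMeasure (beliefPush T z' u)] :
    ∑ y, |obsProb T Q z u y - obsProb T Q z' u y| ≤
      tvDist (beliefPush T z u) (beliefPush T z' u) :=
  sum_abs_integral_sub_le_tvDist hQ_meas fun x => by
    simp only [abs_of_nonneg (hQ_nonneg x _), hQ_sum, le_refl]

lemma sum_obsProb_mul_rhoSeq_le [Fintype Y] (hQ_meas : ∀ y, Measurable fun x => Q x y)
    (hQ_nonneg : ∀ x y, 0 ≤ Q x y) (hQ_sum : ∀ x, ∑ y, Q x y = 1) {fs : ℕ → X → ℝ}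
    (hfs_meas : ∀ k, Measurable (fs k)) (hfs_bdd : ∀ k x, |fs k x| ≤ 1)
    {z z' : Measure X} {u : U}
    [IsProbabilityMeasure (beliefPush T z u)] [IsProbabilityMeasure (beliefPush T z' u)] :
    ∑ y, obsProb T Q z' u y * rhoSeq fs (bayes T Q z u y) (bayes T Q z' u y) ≤
      tvDist (beliefPush T z u) (beliefPush T z' u) := by
  set τ := tvDist (beliefPush T z u) (beliefPush T z' u)
  have hQ_le : ∀ x y, |Q x y| ≤ 1 := fun x y => by
    rw [abs_of_nonneg (hQ_nonneg x y), ← hQ_sum x]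
    exact Finset.single_le_sum (fun y _ => hQ_nonneg x y) (Finset.mem_univ y)
  have hA : ∀ (w : Measure X) [IsProbabilityMeasure (beliefPush T w u)] k y,
      |∫ x, Q x y * fs k x ∂(beliefPush T w u)| ≤ obsProb T Q w u y := fun w _ k y =>
    abs_integral_mul_le_integral (hQ_nonneg · y) (integrable_of_abs_le (hQ_meas y) (hQ_le · y))
      (hfs_bdd k)
  have hF : ∀ (w : Measure X) [IsProbabilityMeasure (beliefPush T w u)] k y,
      |∫ x, fs k x ∂(bayes T Q w u y)| ≤ 1 := fun w _ k y => by
    rw [integral_bayes hQ_meas hQ_nonneg, abs_mul, abs_inv,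
      abs_of_nonneg (obsProb_nonneg hQ_nonneg w u y)]
    exact inv_mul_le_one_of_le₀ (hA w k y) (obsProb_nonneg hQ_nonneg w u y)
  refine (sum_mul_rhoSeq_le (M := 2) (C := 2 * τ)
    (fun y k => (abs_sub _ _).trans (by linarith [hF z k y, hF z' k y])) fun k => ?_).trans_eq
    (by ring)
  calc ∑ y, obsProb T Q z' u y *
        |∫ x, fs k x ∂(bayes T Q z u y) - ∫ x, fs k x ∂(bayes T Q z' u y)|
      ≤ ∑ y, (|obsProb T Q z u y - obsProb T Q z' u y| +
          |∫ x, Q x y * fs k x ∂(beliefPush T z u) - ∫ x, Q x y * fs k x ∂(beliefPush T z' u)|) :=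
        Finset.sum_le_sum fun y _ => by
          rw [integral_bayes hQ_meas hQ_nonneg, integral_bayes hQ_meas hQ_nonneg]
          exact mul_abs_inv_mul_sub_inv_mul_le (obsProb_nonneg hQ_nonneg z' u y) (hA z k y)
    _ ≤ τ + τ := by
        rw [Finset.sum_add_distrib]
        gcongr
        · exact sum_abs_obsProb_sub_le_tvDist hQ_meas hQ_nonneg hQ_sum
        · refine sum_abs_integral_sub_le_tvDist (fun y => (hQ_meas y).mul (hfs_meas k)) fun x => ?_
          simp only [abs_mul, ← Finset.sum_mul, abs_of_nonneg (hQ_nonneg x _), hQ_sum, one_mul,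
            hfs_bdd k x]
    _ = 2 * τ := by ring

lemma abs_etaInt_sub_le_tvDist [Fintype Y] (hQ_meas : ∀ y, Measurable fun x => Q x y)
    (hQ_nonneg : ∀ x y, 0 ≤ Q x y) (hQ_sum : ∀ x, ∑ y, Q x y = 1) {fs : ℕ → X → ℝ}
    (hfs_meas : ∀ k, Measurable (fs k)) (hfs_bdd : ∀ k x, |fs k x| ≤ 1)
    {z z' : Measure X} {u : U}
    [IsProbabilityMeasure (beliefPush T z u)] [IsProbabilityMeasure (beliefPush T z' u)]
    {f : Measure X → ℝ} (hf : blNormLE (rhoSeq fs) f 1) :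
    |etaInt T Q f z u - etaInt T Q f z' u| ≤ tvDist (beliefPush T z u) (beliefPush T z' u) := by
  obtain ⟨a, b, ha, hb, hab, hfa, hfb⟩ := hf
  set τ := tvDist (beliefPush T z u) (beliefPush T z' u)
  set p := obsProb T Q z u
  set p' := obsProb T Q z' u
  set F := bayes T Q z u
  set F' := bayes T Q z' u
  have hterm : ∀ y, |p y * f (F y) - p' y * f (F' y)| ≤
      a * |p y - p' y| + b * (p' y * rhoSeq fs (F y) (F' y)) := fun y => calc
    _ = |(p y - p' y) * f (F y) + p' y * (f (F y) - f (F' y))| := by ring_nf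
    _ ≤ |p y - p' y| * a + p' y * (b * rhoSeq fs (F y) (F' y)) := by
        refine (abs_add_le _ _).trans ?_
        rw [abs_mul, abs_mul, abs_of_nonneg (obsProb_nonneg hQ_nonneg z' u y)]
        gcongr
        exacts [hfa _, obsProb_nonneg hQ_nonneg z' u y, hfb _ _]
    _ = _ := by ring
  rw [etaInt_eq_sum hQ_nonneg, etaInt_eq_sum hQ_nonneg, ← Finset.sum_sub_distrib]
  calc |∑ y, (p y * f (F y) - p' y * f (F' y))|
      ≤ ∑ y, (a * |p y - p' y| + b * (p' y * rhoSeq fs (F y) (F' y))) :=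
        (Finset.abs_sum_le_sum_abs _ _).trans (Finset.sum_le_sum fun y _ => hterm y)
    _ = a * ∑ y, |p y - p' y| + b * ∑ y, p' y * rhoSeq fs (F y) (F' y) := by
        rw [Finset.sum_add_distrib, ← Finset.mul_sum, ← Finset.mul_sum]
    _ ≤ a * τ + b * τ := by
        gcongr
        · exact sum_abs_obsProb_sub_le_tvDist hQ_meas hQ_nonneg hQ_sum
        · exact sum_obsProb_mul_rhoSeq_le hQ_meas hQ_nonneg hQ_sum hfs_meas hfs_bdd
    _ ≤ τ := by nlinarith [(tvDist_nonneg : 0 ≤ τ)]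

lemma etaBLDist_le_tvDist [Fintype Y] (hQ_meas : ∀ y, Measurable fun x => Q x y)
    (hQ_nonneg : ∀ x y, 0 ≤ Q x y) (hQ_sum : ∀ x, ∑ y, Q x y = 1) {fs : ℕ → X → ℝ}
    (hfs_meas : ∀ k, Measurable (fs k)) (hfs_bdd : ∀ k x, |fs k x| ≤ 1)
    {z z' : Measure X} {u : U}
    [IsProbabilityMeasure (beliefPush T z u)] [IsProbabilityMeasure (beliefPush T z' u)] :
    etaBLDist T Q (rhoSeq fs) z z' u ≤ tvDist (beliefPush T z u) (beliefPush T z' u) :=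
  Real.sSup_le (by
    rintro _ ⟨f, hf, rfl⟩
    exact abs_etaInt_sub_le_tvDist hQ_meas hQ_nonneg hQ_sum hfs_meas hfs_bdd hf) tvDist_nonneg

lemma etaBLDist_self [Fintype Y] (ρ : Measure X → Measure X → ℝ) (z : Measure X) (u : U) :
    etaBLDist T Q ρ z z u = 0 :=
  le_antisymm (Real.sSup_le (by rintro _ ⟨f, -, rfl⟩; simp) le_rfl)
    (Real.sSup_nonneg <| by rintro _ ⟨f, -, rfl⟩; exact abs_nonneg _)

end Beliefs

lemma dobrushinObs_le_one {X Y : Type*} [Fintype Y] [Nonempty X] {Q : X → Y → ℝ}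
    (hQ_nonneg : ∀ x y, 0 ≤ Q x y) (hQ_sum : ∀ x, ∑ y, Q x y = 1) : dobrushinObs Q ≤ 1 := by
  obtain ⟨x⟩ := ‹Nonempty X›
  calc dobrushinObs Q ≤ ∑ y, min (Q x y) (Q x y) :=
        ciInf_le ⟨0, by
          rintro _ ⟨q, rfl⟩
          exact Finset.sum_nonneg fun y _ => le_min (hQ_nonneg q.1 y) (hQ_nonneg q.2 y)⟩ (x, x)
    _ = 1 := by simp only [min_self, hQ_sum]

theorem statement1_general {m : ℕ} (Xs : Set (EuclideanSpace ℝ (Fin m)))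
    {Y U : Type*} [Fintype Y]
    (T : Xs → U → MeasureTheory.Measure Xs)
    (hT_meas : ∀ u : U, Measurable fun x : Xs => T x u)
    (hT_prob : ∀ (x : Xs) (u : U), MeasureTheory.IsProbabilityMeasure (T x u))
    (Q : Xs → Y → ℝ)
    (hQ_meas : ∀ y : Y, Measurable fun x : Xs => Q x y)
    (hQ_nonneg : ∀ (x : Xs) (y : Y), 0 ≤ Q x y)
    (hQ_sum : ∀ x : Xs, ∑ y : Y, Q x y = 1)
    (αX : ℝ)
    (hT_lip : ∀ (x x' : Xs) (u : U), tvDist (T x u) (T x' u) ≤ αX * dist x x')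
    (fs : ℕ → Xs → ℝ)
    (hfs_meas : ∀ k, Measurable (fs k))
    (hfs_bdd : ∀ (k : ℕ) (x : Xs), |fs k x| ≤ 1)
    (z z' : MeasureTheory.Measure Xs)
    (hz : MeasureTheory.IsProbabilityMeasure z)
    (hz' : MeasureTheory.IsProbabilityMeasure z')
    (u : U) :
    etaBLDist T Q (rhoSeq fs) z z' u ≤
      (3 - 2 * dobrushinObs Q) * (1 + αX) * blDist (fun x x' : Xs => dist x x') z z' := by
  rcases subsingleton_or_nontrivial Xs with _ | _
  · obtain rfl : z = z' := by
      ext s hs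
      rcases s.eq_empty_or_nonempty with rfl | hne
      · simp
      · simp [Subsingleton.eq_univ_of_nonempty hne]
    simp [etaBLDist_self, blDist_self]
  obtain ⟨x, x', hxx'⟩ := exists_pair_ne Xs
  have hα : 0 ≤ αX :=
    nonneg_of_mul_nonneg_left (tvDist_nonneg.trans (hT_lip x x' u)) (dist_pos.2 hxx')
  let κ : Kernel Xs Xs := ⟨fun x => T x u, hT_meas u⟩
  have : IsMarkovKernel κ := ⟨fun x => hT_prob x u⟩
  have : IsProbabilityMeasure (beliefPush T z u) :=
    inferInstanceAs (IsProbabilityMeasure (κ ∘ₘ z))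
  have : IsProbabilityMeasure (beliefPush T z' u) :=
    inferInstanceAs (IsProbabilityMeasure (κ ∘ₘ z'))
  calc etaBLDist T Q (rhoSeq fs) z z' u ≤ tvDist (beliefPush T z u) (beliefPush T z' u) :=
        etaBLDist_le_tvDist hQ_meas hQ_nonneg hQ_sum hfs_meas hfs_bdd
    _ ≤ (1 + αX) * blDist (fun x x' : Xs => dist x x') z z' :=
        tvDist_comp_le_mul_blDist (κ := κ) hα fun x x' => hT_lip x x' u
    _ ≤ (3 - 2 * dobrushinObs Q) * (1 + αX) * blDist (fun x x' : Xs => dist x x') z z' := by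
        rw [mul_assoc]
        refine le_mul_of_one_le_left (mul_nonneg (by linarith) blDist_nonneg) ?_
        linarith [dobrushinObs_le_one hQ_nonneg hQ_sum]

theorem statement1 {m : ℕ} (Xs : Set (EuclideanSpace ℝ (Fin m))) (hXs : MeasurableSet Xs)
    {Y U : Type*} [Fintype Y] [Fintype U]
    (T : Xs → U → MeasureTheory.Measure Xs)
    (hT_meas : ∀ u : U, Measurable fun x : Xs => T x u)
    (hT_prob : ∀ (x : Xs) (u : U), MeasureTheory.IsProbabilityMeasure (T x u))
    (Q : Xs → Y → ℝ)
    (hQ_meas : ∀ y : Y, Measurable fun x : Xs => Q x y)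
    (hQ_nonneg : ∀ (x : Xs) (y : Y), 0 ≤ Q x y)
    (hQ_sum : ∀ x : Xs, ∑ y : Y, Q x y = 1)
    (αX : ℝ)
    (hT_lip : ∀ (x x' : Xs) (u : U), tvDist (T x u) (T x' u) ≤ αX * dist x x')
    (fs : ℕ → Xs → ℝ)
    (hfs_meas : ∀ k, Measurable (fs k))
    (hfs_bdd : ∀ (k : ℕ) (x : Xs), |fs k x| ≤ 1)
    (z z' : MeasureTheory.Measure Xs)
    (hz : MeasureTheory.IsProbabilityMeasure z)
    (hz' : MeasureTheory.IsProbabilityMeasure z')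
    (u : U) :
    etaBLDist T Q (rhoSeq fs) z z' u ≤
      (3 - 2 * dobrushinObs Q) * (1 + αX) * blDist (fun x x' : Xs => dist x x') z z' :=
  statement1_general Xs T hT_meas hT_prob Q hQ_meas hQ_nonneg hQ_sum αX hT_lip fs hfs_meas hfs_bdd z
    z' hz hz' u
end

section
/- Let (Z,d) be a metric space, U a finite nonempty set, β ∈ (0,1) with βα_Z < 1, c : Z×U → ℝ bounded measurable with |c(z,u) − c(z',u)| ≤ α_c d(z,z') for all z, z' ∈ Z and u ∈ U, and let η be a Markov kernel from Z×U to Z satisfying the bounded-Lipschitz contraction condition with constant α_Z. If J : Z → ℝ is a bounded Lipschitz function satisfying the fixed-point equation J(z) = min_{u∈U} ( c(z,u) + β ∫ J(z₁) η(dz₁|z,u) ) for all z ∈ Z, then ‖J‖_BL ≤ (1/(1 − βα_Z)) ( ‖c‖_∞/(1 − β) + α_c ). -/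
open MeasureTheory

noncomputable section

/-- Sup norm `‖c‖_∞` of a two-variable (stage cost) function. -/
def supNorm {Z U : Type*} (c : Z → U → ℝ) : ℝ :=
  ⨆ p : Z × U, |c p.1 p.2|

/-- The bounded-Lipschitz contraction condition for the kernel `η` with constant `αZ`:
`|∫ f dη(·|z,u) − ∫ f dη(·|z',u)| ≤ αZ ‖f‖_BL d(z,z')` for every bounded Lipschitz `f`. -/
def blContract {Z U : Type*} [MeasurableSpace Z] [MetricSpace Z]
    (η : Z → U → Measure Z) (αZ : ℝ) : Prop :=
  ∀ (f : Z → ℝ) (C : ℝ), blNormLE dist f C → ∀ (u : U) (z z' : Z),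
    |∫ x, f x ∂(η z u) - ∫ x, f x ∂(η z' u)| ≤ αZ * C * dist z z'

end

open Filter Topology

/-!
Write `q = β α_Z` and `K₀ = ‖c‖_∞ / (1 - β)`. Taking a minimising action in the fixed-point
equation shows that any bound `a` on `|J|` improves to `‖c‖_∞ + β a`, and that if `‖J‖_BL ≤ C`
then `J` is `(α_c + q C)`-Lipschitz. Both maps are affine contractions, so iterating them from
the a priori bounds of `J` drives the constants to their fixed points: `|J| ≤ K₀`, and then
`J` is `L`-Lipschitz for the fixed point `L = (α_c + q K₀) / (1 - q)` of `b ↦ α_c + q (K₀ + b)`.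
Finally `K₀ + L = (K₀ + α_c) / (1 - q)`.
-/

theorem le_div_one_sub_mul_of_self_improving {ι : Type*} {v w : ι → ℝ} {K q : ℝ}
    (hK : 0 ≤ K) (hq0 : 0 ≤ q) (hq1 : q < 1)
    (hinit : ∃ b, 0 ≤ b ∧ ∀ i, v i ≤ b * w i)
    (hstep : ∀ b, 0 ≤ b → (∀ i, v i ≤ b * w i) → ∀ i, v i ≤ (K + q * b) * w i) (i : ι) :
    v i ≤ K / (1 - q) * w i := by
  obtain ⟨b₀, hb₀, hv₀⟩ := hinit
  set b := K / (1 - q)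
  have hb : 0 ≤ b := div_nonneg hK (by linarith)
  have hfix : K = b - q * b := by
    simp only [b]
    field_simp [(by linarith : (1 - q) ≠ 0)]
  have hiter : ∀ n : ℕ, ∀ i, v i ≤ (q ^ n * b₀ + (1 - q ^ n) * b) * w i := by
    intro n
    induction n with
    | zero => simpa using hv₀
    | succ n ih =>
      have hnonneg : 0 ≤ q ^ n * b₀ + (1 - q ^ n) * b := by
        have : q ^ n ≤ 1 := pow_le_one₀ hq0 hq1.le
        have : 0 ≤ 1 - q ^ n := by linarith
        positivity
      intro i
      convert hstep _ hnonneg ih i using 2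
      rw [hfix]
      ring
  have hlim : Tendsto (fun n : ℕ => (q ^ n * b₀ + (1 - q ^ n) * b) * w i) atTop
      (𝓝 ((0 * b₀ + (1 - 0) * b) * w i)) := by
    have hpow := tendsto_pow_atTop_nhds_zero_of_lt_one hq0 hq1
    exact (((hpow.mul_const b₀).add ((tendsto_const_nhds.sub hpow).mul_const b)).mul_const _)
  simp only [zero_mul, sub_zero, one_mul, zero_add] at hlim
  exact ge_of_tendsto' hlim fun n => hiter n i

theorem ciInf_le_ciInf_add_of_le_add {U : Type*} [Finite U] [Nonempty U] {f g : U → ℝ}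
    {ε : ℝ} (h : ∀ u, f u ≤ g u + ε) : ⨅ u, f u ≤ (⨅ u, g u) + ε := by
  obtain ⟨u, hu⟩ := exists_eq_ciInf_of_finite (f := g)
  calc ⨅ u, f u ≤ f u := ciInf_le (Finite.bddBelow_range f) u
    _ ≤ (⨅ u, g u) + ε := hu ▸ h u

theorem abs_ciInf_sub_ciInf_le {U : Type*} [Finite U] [Nonempty U] {f g : U → ℝ}
    {ε : ℝ} (h : ∀ u, |f u - g u| ≤ ε) : |(⨅ u, f u) - ⨅ u, g u| ≤ ε := by
  rw [abs_sub_le_iff]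
  constructor
  · have := ciInf_le_ciInf_add_of_le_add (f := f) (g := g) (ε := ε)
      fun u => by linarith [(abs_sub_le_iff.mp (h u)).1]
    linarith
  · have := ciInf_le_ciInf_add_of_le_add (f := g) (g := f) (ε := ε)
      fun u => by linarith [(abs_sub_le_iff.mp (h u)).2]
    linarith

theorem abs_add_mul_le_of_nonneg {β : ℝ} (hβ : 0 ≤ β) (a b : ℝ) :
    |a + β * b| ≤ |a| + β * |b| :=
  (abs_add_le _ _).trans_eq (by rw [abs_mul, abs_of_nonneg hβ])

section Bellman

variable {Z U : Type*} [MeasurableSpace Z] [Finite U] [Nonempty U]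
  {β : ℝ} {c : Z → U → ℝ} {η : Z → U → Measure Z} {J : Z → ℝ}

theorem abs_le_of_bellman_fixedPoint (hβ : 0 ≤ β) {S : ℝ} (hc : ∀ z u, |c z u| ≤ S)
    (hη : ∀ z u, IsProbabilityMeasure (η z u))
    (hJ : ∀ z, J z = ⨅ u, (c z u + β * ∫ z₁, J z₁ ∂(η z u)))
    {a : ℝ} (ha : ∀ z, |J z| ≤ a) (z : Z) : |J z| ≤ S + β * a := by
  have hint : ∀ u, |∫ z₁, J z₁ ∂(η z u)| ≤ a := fun u => by
    have := hη z u
    simpa using norm_integral_le_of_norm_le_const (μ := η z u) (f := J) (ae_of_all _ ha)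
  simpa [hJ z] using abs_ciInf_sub_ciInf_le (g := fun _ : U => (0 : ℝ)) fun u => calc
    |c z u + β * ∫ z₁, J z₁ ∂(η z u) - 0| ≤ |c z u| + β * |∫ z₁, J z₁ ∂(η z u)| := by
      simpa using abs_add_mul_le_of_nonneg hβ _ _
    _ ≤ S + β * a := add_le_add (hc z u) (mul_le_mul_of_nonneg_left (hint u) hβ)

theorem abs_sub_le_of_bellman_fixedPoint [MetricSpace Z] (hβ : 0 ≤ β) {αc αZ : ℝ}
    (hc : ∀ z z' u, |c z u - c z' u| ≤ αc * dist z z') (hη : blContract η αZ)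
    (hJ : ∀ z, J z = ⨅ u, (c z u + β * ∫ z₁, J z₁ ∂(η z u)))
    {C : ℝ} (hC : blNormLE dist J C) (x y : Z) :
    |J x - J y| ≤ (αc + β * αZ * C) * dist x y := by
  rw [hJ x, hJ y]
  refine abs_ciInf_sub_ciInf_le fun u => ?_
  calc |c x u + β * ∫ z₁, J z₁ ∂(η x u) - (c y u + β * ∫ z₁, J z₁ ∂(η y u))|
      = |(c x u - c y u) + β * (∫ z₁, J z₁ ∂(η x u) - ∫ z₁, J z₁ ∂(η y u))| := by
        congr 1; ring
    _ ≤ |c x u - c y u| + β * |∫ z₁, J z₁ ∂(η x u) - ∫ z₁, J z₁ ∂(η y u)| :=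
      abs_add_mul_le_of_nonneg hβ _ _
    _ ≤ αc * dist x y + β * (αZ * C * dist x y) :=
      add_le_add (hc x y u) (mul_le_mul_of_nonneg_left (hη J C hC u x y) hβ)
    _ = (αc + β * αZ * C) * dist x y := by ring

end Bellman

theorem statement8_general {Z U : Type*} [MetricSpace Z] [MeasurableSpace Z]
    [Fintype U] [Nonempty U]
    (β : ℝ) (hβ0 : 0 < β) (hβ1 : β < 1)
    (c : Z → U → ℝ)
    (hc_bdd : ∃ M : ℝ, ∀ (z : Z) (u : U), |c z u| ≤ M)
    (αc : ℝ) (hαc : 0 ≤ αc)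
    (hc_lip : ∀ (z z' : Z) (u : U), |c z u - c z' u| ≤ αc * dist z z')
    (η : Z → U → MeasureTheory.Measure Z)
    (hη_prob : ∀ (z : Z) (u : U), MeasureTheory.IsProbabilityMeasure (η z u))
    (αZ : ℝ) (hαZ : 0 ≤ αZ)
    (hη_contract : blContract η αZ)
    (hβαZ : β * αZ < 1)
    (J : Z → ℝ)
    (hJ_bl : ∃ C : ℝ, blNormLE dist J C)
    (hJ_fix : ∀ z : Z, J z = ⨅ u : U, (c z u + β * ∫ z₁, J z₁ ∂(η z u))) :
    blNormLE dist J (1 / (1 - β * αZ) * (supNorm c / (1 - β) + αc)) := by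
  obtain ⟨-, a₀, b₀, ha₀, hb₀, -, hJa₀, hJb₀⟩ := hJ_bl
  obtain ⟨M, hM⟩ := hc_bdd
  have hc_sup : ∀ z u, |c z u| ≤ supNorm c := fun z u =>
    le_ciSup (f := fun p : Z × U => |c p.1 p.2|) ⟨M, by rintro _ ⟨p, rfl⟩; exact hM p.1 p.2⟩ (z, u)
  have hS : 0 ≤ supNorm c := Real.iSup_nonneg fun _ => abs_nonneg _
  set K₀ := supNorm c / (1 - β)
  set q := β * αZ
  have hq : 0 ≤ q := mul_nonneg hβ0.le hαZ
  have hJ_sup : ∀ z, |J z| ≤ K₀ := by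
    simpa using le_div_one_sub_mul_of_self_improving (v := fun z => |J z|) (w := fun _ => 1)
      hS hβ0.le hβ1 ⟨a₀, ha₀, by simpa using hJa₀⟩
      fun a _ ha z => by
        simpa using abs_le_of_bellman_fixedPoint hβ0.le hc_sup hη_prob hJ_fix
          (fun z => by simpa using ha z) z
  have hK₀ : 0 ≤ K₀ := div_nonneg hS (by linarith)
  have hJ_lip : ∀ x y, |J x - J y| ≤ (αc + q * K₀) / (1 - q) * dist x y := fun x y =>
    le_div_one_sub_mul_of_self_improving (v := fun p : Z × Z => |J p.1 - J p.2|)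
      (w := fun p => dist p.1 p.2) (by positivity) hq hβαZ
      ⟨b₀, hb₀, fun p => hJb₀ p.1 p.2⟩
      (fun b hb hlip p => (abs_sub_le_of_bellman_fixedPoint hβ0.le hc_lip hη_contract hJ_fix
        ⟨K₀, b, hK₀, hb, le_rfl, hJ_sup, fun x y => hlip (x, y)⟩ p.1 p.2).trans_eq (by ring))
      (x, y)
  refine ⟨K₀, (αc + q * K₀) / (1 - q), hK₀, by positivity, le_of_eq ?_, hJ_sup, hJ_lip⟩
  field_simp [(by linarith : (1 - q) ≠ 0)]
  ring

theorem statement8 {Z U : Type*} [MetricSpace Z] [MeasurableSpace Z] [BorelSpace Z]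
    [Fintype U] [Nonempty U]
    (β : ℝ) (hβ0 : 0 < β) (hβ1 : β < 1)
    (c : Z → U → ℝ)
    (hc_meas : ∀ u : U, Measurable fun z : Z => c z u)
    (hc_bdd : ∃ M : ℝ, ∀ (z : Z) (u : U), |c z u| ≤ M)
    (αc : ℝ) (hαc : 0 ≤ αc)
    (hc_lip : ∀ (z z' : Z) (u : U), |c z u - c z' u| ≤ αc * dist z z')
    (η : Z → U → MeasureTheory.Measure Z)
    (hη_meas : ∀ u : U, Measurable fun z : Z => η z u)
    (hη_prob : ∀ (z : Z) (u : U), MeasureTheory.IsProbabilityMeasure (η z u))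
    (αZ : ℝ) (hαZ : 0 ≤ αZ)
    (hη_contract : blContract η αZ)
    (hβαZ : β * αZ < 1)
    (J : Z → ℝ)
    (hJ_bl : ∃ C : ℝ, blNormLE dist J C)
    (hJ_fix : ∀ z : Z, J z = ⨅ u : U, (c z u + β * ∫ z₁, J z₁ ∂(η z u))) :
    blNormLE dist J (1 / (1 - β * αZ) * (supNorm c / (1 - β) + αc)) :=
  statement8_general β hβ0 hβ1 c hc_bdd αc hαc hc_lip η hη_prob αZ hαZ hη_contract hβαZ J hJ_bl
    hJ_fix
end
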